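/- Let d ≥ 2 and N ≥ 1 be integers, and let A ∈ ℤ^{N×d} be an (N,d)-complete consecutive integers matrix. Writing a_d(k) = d + Σ_{i=0}^{d−1} Σ_{j=1}^{k} i·d^{j−1}, one has a_d(⌊log_d N⌋) ≤ β(A) ≤ γ(A) ≤ a_d(⌈log_d N⌉). -/

import Mathlib

/-! Auxiliary construction: permutations of `Fin N` for the balanced partition. -/

private def bf (N : ℕ) (x : Fin N) : Fin N :=
  if (x : ℕ) % 2 = 0 then ⟨(x : ℕ)/2, by have := x.isLt; omega⟩
  else ⟨(N + (x : ℕ))/2, by have := x.isLt; omega⟩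

private def gf (N : ℕ) (x : Fin N) : Fin N :=
  if (x : ℕ) % 2 = 0 then ⟨N/2 + (x : ℕ)/2, by have := x.isLt; omega⟩
  else ⟨(x : ℕ)/2, by have := x.isLt; have := x.pos; omega⟩

private lemma bf_inj (N : ℕ) : Function.Injective (bf N) := by
  intro x y h
  have hx := x.isLt; have hy := y.isLt
  apply Fin.ext
  unfold bf at h
  split_ifs at h <;> simp only [Fin.mk.injEq] at h <;> omega

private lemma gf_inj (N : ℕ) : Function.Injective (gf N) := by
  intro x y h
  have hx := x.isLt; have hy := y.isLt
  apply Fin.ext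
  unfold gf at h
  split_ifs at h <;> simp only [Fin.mk.injEq] at h <;> omega

private noncomputable def bP (N : ℕ) : Equiv.Perm (Fin N) :=
  Equiv.ofBijective _ (Finite.injective_iff_bijective.mp (bf_inj N))

private noncomputable def gP (N : ℕ) : Equiv.Perm (Fin N) :=
  Equiv.ofBijective _ (Finite.injective_iff_bijective.mp (gf_inj N))

private lemma bP_apply (N : ℕ) (x : Fin N) : bP N x = bf N x := rfl
private lemma gP_apply (N : ℕ) (x : Fin N) : gP N x = gf N x := rfl

private lemma bg_ub (N : ℕ) (x : Fin N) :
    ((bP N x : ℕ)) + (gP N x : ℕ) ≤ N/2 + (x : ℕ) := by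
  rw [bP_apply, gP_apply]
  have := x.isLt
  unfold bf gf
  split_ifs <;> simp only <;> omega

private lemma bg_lb (N : ℕ) (x : Fin N) :
    N/2 + (x : ℕ) ≤ (bP N x : ℕ) + (gP N x : ℕ) + 1 := by
  rw [bP_apply, gP_apply]
  have := x.isLt
  unfold bf gf
  split_ifs <;> simp only <;> omega

private lemma bg_lb_odd (N : ℕ) (hN : N % 2 = 1) (x : Fin N) :
    N/2 + (x : ℕ) ≤ (bP N x : ℕ) + (gP N x : ℕ) := by
  rw [bP_apply, gP_apply]
  have := x.isLt
  unfold bf gf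
  split_ifs <;> simp only <;> omega

/-! Column permutation tuples. -/

private noncomputable def qE (N : ℕ) (j : ℕ) : Equiv.Perm (Fin N) :=
  if j % 2 = 0 then 1 else Fin.revPerm

private noncomputable def qO (N : ℕ) : ℕ → Equiv.Perm (Fin N)
  | 0 => bP N * Fin.revPerm
  | 1 => gP N * Fin.revPerm
  | 2 => 1
  | (j+3) => if j % 2 = 1 then Fin.revPerm else 1

private lemma qE_sum (N : ℕ) (i : Fin N) (k : ℕ) :
    ∑ j ∈ Finset.range (2*k), ((qE N j) i : ℕ) = k * (N-1) := by
  induction k with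
  | zero => simp
  | succ k ih =>
    rw [show 2*(k+1) = 2*k + 1 + 1 by ring, Finset.sum_range_succ, Finset.sum_range_succ, ih]
    have e1 : qE N (2*k) = 1 := by unfold qE; rw [if_pos (by omega)]
    have e2 : qE N (2*k+1) = Fin.revPerm := by unfold qE; rw [if_neg (by omega)]
    rw [e1, e2, add_mul, one_mul]
    have := i.isLt
    simp only [Equiv.Perm.one_apply, Fin.revPerm_apply, Fin.val_rev]
    omega

private lemma qO_sum (N : ℕ) (i : Fin N) (k : ℕ) :
    ∑ j ∈ Finset.range (3 + 2*k), ((qO N j) i : ℕ)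
      = ((bP N) (Fin.revPerm i) : ℕ) + ((gP N) (Fin.revPerm i) : ℕ) + (i : ℕ) + k*(N-1) := by
  induction k with
  | zero =>
    rw [show 3 + 2*0 = 3 by ring]
    rw [Finset.sum_range_succ, Finset.sum_range_succ, Finset.sum_range_succ,
      Finset.sum_range_zero]
    simp [qO, Equiv.Perm.mul_apply]
  | succ k ih =>
    rw [show 3 + 2*(k+1) = (3 + 2*k) + 1 + 1 by ring, Finset.sum_range_succ,
      Finset.sum_range_succ, ih]
    have e1 : qO N (3 + 2*k) = 1 := by
      rw [show 3 + 2*k = (2*k) + 3 by ring]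
      show (if (2*k) % 2 = 1 then (Fin.revPerm : Equiv.Perm (Fin N)) else 1) = 1
      rw [if_neg (by omega)]
    have e2 : qO N (3 + 2*k + 1) = Fin.revPerm := by
      rw [show 3 + 2*k + 1 = (2*k+1) + 3 by ring]
      show (if (2*k+1) % 2 = 1 then (Fin.revPerm : Equiv.Perm (Fin N)) else 1) = Fin.revPerm
      rw [if_pos (by omega)]
    rw [e1, e2, add_mul, one_mul]
    have := i.isLt
    simp only [Equiv.Perm.one_apply, Fin.revPerm_apply, Fin.val_rev]
    omega
/-- The row sum of an integer matrix. -/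
def rowSum {m d : ℕ} (A : Matrix (Fin m) (Fin d) ℤ) (i : Fin m) : ℤ :=
  ∑ j, A i j

/-- `colPermute A P` is the matrix `A^Π`: column `j` of `A` permuted by `P j`,
i.e. `(A^Π)_{i,j} = A_{(P j)⁻¹ i, j}`. -/
def colPermute {m d : ℕ} (A : Matrix (Fin m) (Fin d) ℤ)
    (P : Fin d → Equiv.Perm (Fin m)) : Matrix (Fin m) (Fin d) ℤ :=
  fun i j => A ((P j)⁻¹ i) j

/-- `gamma A` = min over all tuples of column permutations of the maximal row sum. -/
def gamma {m d : ℕ} [NeZero m] (A : Matrix (Fin m) (Fin d) ℤ) : ℤ :=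
  Finset.univ.inf' Finset.univ_nonempty fun P : Fin d → Equiv.Perm (Fin m) =>
    Finset.univ.sup' Finset.univ_nonempty fun i => rowSum (colPermute A P) i

/-- `beta A` = max over all tuples of column permutations of the minimal row sum. -/
def beta {m d : ℕ} [NeZero m] (A : Matrix (Fin m) (Fin d) ℤ) : ℤ :=
  Finset.univ.sup' Finset.univ_nonempty fun P : Fin d → Equiv.Perm (Fin m) =>
    Finset.univ.inf' Finset.univ_nonempty fun i => rowSum (colPermute A P) i

private lemma rowSum_total {m d : ℕ} (A : Matrix (Fin m) (Fin d) ℤ)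
    (P : Fin d → Equiv.Perm (Fin m)) :
    ∑ i, rowSum (colPermute A P) i = ∑ i, ∑ j, A i j := by
  simp only [rowSum, colPermute]
  calc ∑ i, ∑ j, A ((P j)⁻¹ i) j = ∑ j, ∑ i, A ((P j)⁻¹ i) j := Finset.sum_comm
    _ = ∑ j, ∑ i, A i j := Finset.sum_congr rfl fun j _ =>
        Equiv.sum_comp (P j)⁻¹ (fun i => A i j)
    _ = ∑ i, ∑ j, A i j := Finset.sum_comm

private lemma beta_le_gamma {m d : ℕ} [NeZero m] (A : Matrix (Fin m) (Fin d) ℤ) :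
    beta A ≤ gamma A := by
  have hm : 0 < m := Nat.pos_of_ne_zero (NeZero.ne m)
  unfold beta gamma
  apply Finset.sup'_le
  intro P _
  apply Finset.le_inf'
  intro P' _
  have h1 : (m : ℤ) * (Finset.univ.inf' Finset.univ_nonempty fun i =>
      rowSum (colPermute A P) i) ≤ ∑ i, rowSum (colPermute A P) i := by
    have := Finset.card_nsmul_le_sum Finset.univ
      (fun i => rowSum (colPermute A P) i)
      (Finset.univ.inf' Finset.univ_nonempty fun i => rowSum (colPermute A P) i)
      (fun i _ => Finset.inf'_le _ (Finset.mem_univ i))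
    simpa [nsmul_eq_mul, Finset.card_univ] using this
  have h2 : ∑ i, rowSum (colPermute A P') i ≤ (m : ℤ) *
      (Finset.univ.sup' Finset.univ_nonempty fun i => rowSum (colPermute A P') i) := by
    have := Finset.sum_le_card_nsmul Finset.univ
      (fun i => rowSum (colPermute A P') i)
      (Finset.univ.sup' Finset.univ_nonempty fun i => rowSum (colPermute A P') i)
      (fun i _ => Finset.le_sup' _ (Finset.mem_univ i))
    simpa [nsmul_eq_mul, Finset.card_univ] using this
  rw [rowSum_total] at h1 h2
  have hmz : (0 : ℤ) < (m : ℤ) := by exact_mod_cast hm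
  exact le_of_mul_le_mul_left (h1.trans h2) hmz

/-- For `d ≥ 2`, `N ≥ 1` and any `(N,d)`-complete consecutive
integers matrix `A` (each column is a permutation of `(1,…,N)ᵀ`, obtained by column
permutations from the matrix with all columns `(1,…,N)ᵀ`), writing
`a_d(k) = d + Σ_{i=0}^{d-1} Σ_{j=1}^{k} i·d^{j-1}`, one has
`a_d(⌊log_d N⌋) ≤ β(A) ≤ γ(A) ≤ a_d(⌈log_d N⌉)`. -/
theorem consecutiveIntegers_beta_gamma_bounds {d N : ℕ} [NeZero N] (hd : 2 ≤ d)
    (A : Matrix (Fin N) (Fin d) ℤ)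
    (hA : ∃ P : Fin d → Equiv.Perm (Fin N), ∀ i j, A i j = ((((P j)⁻¹ i) : ℕ) : ℤ) + 1)
    (a : ℕ → ℤ)
    (ha : ∀ k, a k = (d : ℤ) + ∑ i ∈ Finset.range d, ∑ j ∈ Finset.Icc 1 k,
      (i : ℤ) * (d : ℤ) ^ (j - 1)) :
    a (Nat.log d N) ≤ beta A ∧ beta A ≤ gamma A ∧ gamma A ≤ a (Nat.clog d N) := by
  obtain ⟨P₀, hP₀⟩ := hA
  have hN : 0 < N := Nat.pos_of_ne_zero (NeZero.ne N)
  have hdz2 : (2:ℤ) ≤ (d:ℤ) := by exact_mod_cast hd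
  -- closed form for a
  have ha2 : ∀ k, 2 * a k = 2*(d:ℤ) + (d:ℤ) * ((d:ℤ)^k - 1) := by
    intro k
    have hG : ((d:ℤ) - 1) * (∑ j ∈ Finset.Icc 1 k, (d:ℤ) ^ (j - 1)) = (d:ℤ)^k - 1 := by
      induction k with
      | zero => simp
      | succ k ih =>
        rw [Finset.sum_Icc_succ_top (by omega : 1 ≤ k + 1), show (k+1) - 1 = k by omega,
          mul_add, ih]
        ring
    have hS : (∑ i ∈ Finset.range d, (i:ℤ)) * 2 = (d:ℤ) * ((d:ℤ) - 1) := by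
      have h1 := Finset.sum_range_id_mul_two d
      have h3 : ((d - 1 : ℕ) : ℤ) = (d:ℤ) - 1 := by omega
      calc (∑ i ∈ Finset.range d, (i:ℤ)) * 2
          = (((∑ i ∈ Finset.range d, i) * 2 : ℕ) : ℤ) := by push_cast; ring
        _ = ((d * (d-1) : ℕ) : ℤ) := by rw [h1]
        _ = (d:ℤ) * ((d:ℤ) - 1) := by push_cast [h3]; ring
    rw [ha k]
    have hsplit : (∑ i ∈ Finset.range d, ∑ j ∈ Finset.Icc 1 k, (i:ℤ) * (d:ℤ)^(j-1))
        = (∑ i ∈ Finset.range d, (i:ℤ)) * (∑ j ∈ Finset.Icc 1 k, (d:ℤ)^(j-1)) := by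
      rw [Finset.sum_mul]
      exact Finset.sum_congr rfl fun i _ => (Finset.mul_sum _ _ _).symm
    rw [hsplit]
    linear_combination (∑ j ∈ Finset.Icc 1 k, (d:ℤ)^(j-1)) * hS + (d:ℤ) * hG
  -- construction lemma
  have key : ∀ q : ℕ → Equiv.Perm (Fin N), ∃ P : Fin d → Equiv.Perm (Fin N), ∀ i,
      rowSum (colPermute A P) i
        = (d:ℤ) + ((∑ j ∈ Finset.range d, ((q j) i : ℕ) : ℕ) : ℤ) := by
    intro q
    refine ⟨fun j => (q (j:ℕ))⁻¹ * (P₀ j)⁻¹, fun i => ?_⟩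
    have hentry : ∀ j : Fin d,
        colPermute A (fun j => (q (j:ℕ))⁻¹ * (P₀ j)⁻¹) i j = (((q (j:ℕ)) i : ℕ) : ℤ) + 1 := by
      intro j
      simp [colPermute, hP₀, mul_inv_rev, inv_inv, Equiv.Perm.mul_apply,
        Equiv.symm_apply_apply]
    unfold rowSum
    rw [Finset.sum_congr rfl fun j _ => hentry j, Finset.sum_add_distrib]
    have h4 : ∑ j : Fin d, (((q (j:ℕ)) i : ℕ) : ℤ)
        = ((∑ j ∈ Finset.range d, ((q j) i : ℕ) : ℕ) : ℤ) := by
      rw [Nat.cast_sum]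
      exact Fin.sum_univ_eq_sum_range (fun j => (((q j) i : ℕ) : ℤ)) d
    rw [h4]
    simp [Finset.card_univ, add_comm]
  -- log and clog facts
  have hXle : d ^ (Nat.log d N) ≤ N := Nat.pow_log_le_self d (NeZero.ne N)
  have hYge : N ≤ d ^ (Nat.clog d N) := Nat.le_pow_clog (by omega) N
  have hXz : ((d:ℤ))^(Nat.log d N) = ((d ^ Nat.log d N : ℕ) : ℤ) := by push_cast; rfl
  have hYz : ((d:ℤ))^(Nat.clog d N) = ((d ^ Nat.clog d N : ℕ) : ℤ) := by push_cast; rfl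
  -- the balanced construction, by parity of d
  obtain ⟨P, lo, hi, hlo, hhi, halo, hahi⟩ :
      ∃ (P : Fin d → Equiv.Perm (Fin N)) (lo hi : ℤ),
        (∀ i, lo ≤ rowSum (colPermute A P) i) ∧
        (∀ i, rowSum (colPermute A P) i ≤ hi) ∧
        a (Nat.log d N) ≤ lo ∧ hi ≤ a (Nat.clog d N) := by
    rcases Nat.even_or_odd d with hpar | hpar
    · -- d even : pair up columns, all row sums equal d(N+1)/2
      obtain ⟨e, he⟩ := hpar
      set k := e - 1 with hk
      have hdk : d = 2 * (k + 1) := by omega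
      obtain ⟨P, hP⟩ := key (qE N)
      have hval : ∀ i, rowSum (colPermute A P) i
          = (d:ℤ) + (((k+1) * (N-1) : ℕ) : ℤ) := by
        intro i
        rw [hP i]
        congr 1
        rw [show (Finset.range d) = Finset.range (2*(k+1)) by rw [← hdk]]
        exact congrArg Nat.cast (qE_sum N i (k+1))
      have hcast : (((k+1) * (N-1) : ℕ) : ℤ) * 2 = (d:ℤ) * ((N:ℤ) - 1) := by
        have h1 : ((N - 1 : ℕ) : ℤ) = (N:ℤ) - 1 := by omega
        have hdz : (d:ℤ) = 2*((k:ℤ)+1) := by exact_mod_cast hdk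
        push_cast [h1]
        rw [hdz]; ring
      refine ⟨P, (d:ℤ) + (((k+1) * (N-1) : ℕ) : ℤ), (d:ℤ) + (((k+1) * (N-1) : ℕ) : ℤ),
        fun i => (hval i).ge, fun i => (hval i).le, ?_, ?_⟩
      · have h2 := ha2 (Nat.log d N)
        have hmul : (d:ℤ) * (((d:ℤ))^(Nat.log d N) - 1) ≤ (d:ℤ) * ((N:ℤ) - 1) := by
          apply mul_le_mul_of_nonneg_left _ (by positivity)
          rw [hXz]
          have : ((d ^ Nat.log d N : ℕ) : ℤ) ≤ (N:ℤ) := by exact_mod_cast hXle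
          linarith
        linarith
      · have h2 := ha2 (Nat.clog d N)
        have hmul : (d:ℤ) * ((N:ℤ) - 1) ≤ (d:ℤ) * (((d:ℤ))^(Nat.clog d N) - 1) := by
          apply mul_le_mul_of_nonneg_left _ (by positivity)
          rw [hYz]
          have : (N:ℤ) ≤ ((d ^ Nat.clog d N : ℕ) : ℤ) := by exact_mod_cast hYge
          linarith
        linarith
    · -- d odd
      have hdodd : Odd d := hpar
      have hd3 : 3 ≤ d := by obtain ⟨t, ht⟩ := hpar; omega
      set k := (d - 3)/2 with hk
      have hdk : d = 3 + 2*k := by obtain ⟨t, ht⟩ := hpar; omega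
      obtain ⟨P, hP⟩ := key (qO N)
      have hval : ∀ i, rowSum (colPermute A P) i
          = (d:ℤ) + ((((bP N) (Fin.revPerm i) : ℕ) + ((gP N) (Fin.revPerm i) : ℕ)
              + (i : ℕ) + k*(N-1) : ℕ) : ℤ) := by
        intro i
        rw [hP i]
        congr 1
        rw [show (Finset.range d) = Finset.range (3 + 2*k) by rw [← hdk]]
        exact congrArg Nat.cast (qO_sum N i k)
      have hdz : (d:ℤ) = 3 + 2*(k:ℤ) := by exact_mod_cast hdk
      have hcast : (((N-1) + N/2 + k*(N-1) : ℕ) : ℤ) * 2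
          = (d:ℤ) * ((N:ℤ) - 1) + (if N % 2 = 0 then 1 else 0) := by
        have h1 : ((N - 1 : ℕ) : ℤ) = (N:ℤ) - 1 := by omega
        rw [Nat.cast_add, Nat.cast_add, Nat.cast_mul, h1, hdz]
        by_cases hNp : N % 2 = 0
        · rw [if_pos hNp]
          have hhalf : ((N/2 : ℕ) : ℤ) * 2 = (N:ℤ) := by omega
          linear_combination hhalf
        · rw [if_neg hNp]
          have hhalf : ((N/2 : ℕ) : ℤ) * 2 = (N:ℤ) - 1 := by omega
          linear_combination hhalf
      refine ⟨P, (d:ℤ) + (((N-1) + N/2 + k*(N-1) : ℕ) : ℤ) - (if N % 2 = 0 then 1 else 0),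
        (d:ℤ) + (((N-1) + N/2 + k*(N-1) : ℕ) : ℤ), ?_, ?_, ?_, ?_⟩
      · intro i
        rw [hval i]
        have h3 : ((Fin.revPerm i : Fin N) : ℕ) = N - ((i:ℕ)+1) := by
          rw [Fin.revPerm_apply, Fin.val_rev]
        have hi := i.isLt
        by_cases hNp : N % 2 = 0
        · rw [if_pos hNp]
          have h1 := bg_lb N (Fin.revPerm i)
          rw [h3] at h1
          omega
        · rw [if_neg hNp]
          have h1 := bg_lb_odd N (by omega) (Fin.revPerm i)
          rw [h3] at h1
          omega
      · intro i
        rw [hval i]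
        have h3 : ((Fin.revPerm i : Fin N) : ℕ) = N - ((i:ℕ)+1) := by
          rw [Fin.revPerm_apply, Fin.val_rev]
        have hi := i.isLt
        have h1 := bg_ub N (Fin.revPerm i)
        rw [h3] at h1
        omega
      · -- a (log) ≤ lo
        have h2 := ha2 (Nat.log d N)
        have hXN : ((d ^ Nat.log d N : ℕ) : ℤ) ≤ (N:ℤ) := by exact_mod_cast hXle
        by_cases hNp : N % 2 = 0
        · rw [if_pos hNp] at hcast ⊢
          have hXodd : Odd (d ^ Nat.log d N) := hdodd.pow
          obtain ⟨c, hc⟩ := hXodd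
          have hXle1 : ((d ^ Nat.log d N : ℕ) : ℤ) ≤ (N:ℤ) - 1 := by omega
          have hmul : (d:ℤ) * (((d:ℤ))^(Nat.log d N) - 1) ≤ (d:ℤ) * ((N:ℤ) - 2) := by
            apply mul_le_mul_of_nonneg_left _ (by positivity)
            rw [hXz]; linarith
          linarith
        · rw [if_neg hNp] at hcast ⊢
          have hmul : (d:ℤ) * (((d:ℤ))^(Nat.log d N) - 1) ≤ (d:ℤ) * ((N:ℤ) - 1) := by
            apply mul_le_mul_of_nonneg_left _ (by positivity)
            rw [hXz]; linarith
          linarith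
      · -- hi ≤ a (clog)
        have h2 := ha2 (Nat.clog d N)
        have hYN : (N:ℤ) ≤ ((d ^ Nat.clog d N : ℕ) : ℤ) := by exact_mod_cast hYge
        by_cases hNp : N % 2 = 0
        · rw [if_pos hNp] at hcast
          have hYodd : Odd (d ^ Nat.clog d N) := hdodd.pow
          obtain ⟨c, hc⟩ := hYodd
          have hYge1 : (N:ℤ) + 1 ≤ ((d ^ Nat.clog d N : ℕ) : ℤ) := by omega
          have hmul : (d:ℤ) * (N:ℤ) ≤ (d:ℤ) * (((d:ℤ))^(Nat.clog d N) - 1) := by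
            apply mul_le_mul_of_nonneg_left _ (by positivity)
            rw [hYz]; linarith
          linarith
        · rw [if_neg hNp] at hcast
          have hmul : (d:ℤ) * ((N:ℤ) - 1) ≤ (d:ℤ) * (((d:ℤ))^(Nat.clog d N) - 1) := by
            apply mul_le_mul_of_nonneg_left _ (by positivity)
            rw [hYz]; linarith
          linarith
  -- assemble
  have hβ : a (Nat.log d N) ≤ beta A := by
    unfold beta
    refine le_trans ?_ (Finset.le_sup' _ (Finset.mem_univ P))
    exact le_trans halo (Finset.le_inf' _ _ (fun i _ => hlo i))
  have hγ : gamma A ≤ a (Nat.clog d N) := by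
    unfold gamma
    refine le_trans (Finset.inf'_le _ (Finset.mem_univ P)) ?_
    exact le_trans (Finset.sup'_le _ _ (fun i _ => hhi i)) hahi
  exact ⟨hβ, beta_le_gamma A, hγ⟩
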